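/- Let E be an arbitrary set. Every maximal ideal of C^∞(ℝ^E) is C^∞-radical, and the maps I ↦ Î := {Z(f) : f ∈ I} and Φ ↦ Φ̌ := {f ∈ C^∞(ℝ^E) : Z(f) ∈ Φ} restrict to mutually inverse bijections between the set of all maximal filters of zerosets of ℝ^E (maximal elements among proper filters of zerosets ordered by inclusion) and the set of all maximal ideals of C^∞(ℝ^E). -/

import Mathlib

noncomputable section

open Set

/-- The continuous linear "restriction" map `ℝ^t → ℝ^s` for `s ⊆ t`. -/
def restrCLM {E : Type} (s t : Finset E) (h : s ⊆ t) : (↥t → ℝ) →L[ℝ] (↥s → ℝ) :=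
  LinearMap.toContinuousLinearMap
    (LinearMap.funLeft ℝ ℝ (fun i : ↥s => (⟨i.1, h i.2⟩ : ↥t)))

/-- A function `f : ℝ^E → ℝ` is (`C^∞`-)smooth iff it factors through the projection onto
finitely many coordinates via an infinitely differentiable function. -/
def IsCinf {E : Type} (f : (E → ℝ) → ℝ) : Prop :=
  ∃ (s : Finset E) (g : (↥s → ℝ) → ℝ),
    ContDiff ℝ (⊤ : ℕ∞) g ∧ ∀ v : E → ℝ, f v = g (fun i => v i.1)

theorem IsCinf.enlarge {E : Type} {f : (E → ℝ) → ℝ} {s : Finset E} {g : (↥s → ℝ) → ℝ}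
    (hg : ContDiff ℝ (⊤ : ℕ∞) g) (hfg : ∀ v, f v = g (fun i => v i.1))
    (t : Finset E) (hst : s ⊆ t) :
    ∃ g' : (↥t → ℝ) → ℝ, ContDiff ℝ (⊤ : ℕ∞) g' ∧ ∀ v, f v = g' (fun i => v i.1) := by
  refine ⟨g ∘ restrCLM s t hst, hg.comp (restrCLM s t hst).contDiff, fun v => ?_⟩
  have h1 : (restrCLM s t hst) (fun i : ↥t => v i.1) = fun i : ↥s => v i.1 := rfl
  simp only [Function.comp_apply, h1]
  exact hfg v

/-- The ring `C^∞(ℝ^E)` of smooth functions `ℝ^E → ℝ`, as a subring of the ring of all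
functions `ℝ^E → ℝ` with pointwise operations. -/
def Cinf (E : Type) : Subring ((E → ℝ) → ℝ) where
  carrier := {f | IsCinf f}
  zero_mem' := ⟨∅, fun _ => 0, contDiff_const, fun _ => rfl⟩
  one_mem' := ⟨∅, fun _ => 1, contDiff_const, fun _ => rfl⟩
  neg_mem' := by
    rintro f ⟨s, g, hg, hfg⟩
    exact ⟨s, -g, hg.neg, fun v => by simp [hfg v]⟩
  add_mem' := by
    rintro f₁ f₂ ⟨s, g₁, hg₁, hfg₁⟩ ⟨t, g₂, hg₂, hfg₂⟩
    haveI := Classical.decEq E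
    obtain ⟨g₁', hg₁', hfg₁'⟩ := IsCinf.enlarge hg₁ hfg₁ (s ∪ t) Finset.subset_union_left
    obtain ⟨g₂', hg₂', hfg₂'⟩ := IsCinf.enlarge hg₂ hfg₂ (s ∪ t) Finset.subset_union_right
    exact ⟨s ∪ t, g₁' + g₂', hg₁'.add hg₂', fun v => by
      simp only [Pi.add_apply, hfg₁' v, hfg₂' v]⟩
  mul_mem' := by
    rintro f₁ f₂ ⟨s, g₁, hg₁, hfg₁⟩ ⟨t, g₂, hg₂, hfg₂⟩
    haveI := Classical.decEq E
    obtain ⟨g₁', hg₁', hfg₁'⟩ := IsCinf.enlarge hg₁ hfg₁ (s ∪ t) Finset.subset_union_left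
    obtain ⟨g₂', hg₂', hfg₂'⟩ := IsCinf.enlarge hg₂ hfg₂ (s ∪ t) Finset.subset_union_right
    exact ⟨s ∪ t, g₁' * g₂', hg₁'.mul hg₂', fun v => by
      simp only [Pi.mul_apply, hfg₁' v, hfg₂' v]⟩

/-- The zeroset of a smooth function on `ℝ^E`. -/
def Z {E : Type} (f : Cinf E) : Set (E → ℝ) := {v | (f : (E → ℝ) → ℝ) v = 0}

/-- An ideal `I ⊆ C^∞(ℝ^E)` is `C^∞`-radical iff it contains every function whose zeroset
contains the zeroset of some member of `I`. -/
def IsCinfRadical {E : Type} (I : Ideal (Cinf E)) : Prop :=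
  ∀ g : Cinf E, (∃ f ∈ I, Z f ⊆ Z g) → g ∈ I

/-- The collection of zerosets of `ℝ^E`. -/
def zeroSets (E : Type) : Set (Set (E → ℝ)) := {X | ∃ f : Cinf E, X = Z f}

/-- A filter of zerosets of `ℝ^E`. -/
def IsZFilter {E : Type} (Φ : Set (Set (E → ℝ))) : Prop :=
  Φ ⊆ zeroSets E ∧ (Set.univ : Set (E → ℝ)) ∈ Φ ∧
    (∀ F ∈ Φ, ∀ G ∈ Φ, F ∩ G ∈ Φ) ∧
    (∀ F ∈ Φ, ∀ H ∈ zeroSets E, F ⊆ H → H ∈ Φ)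

/-- `Ŝ`: the set of zerosets of members of a set `S ⊆ C^∞(ℝ^E)`. -/
def hatSet {E : Type} (S : Set (Cinf E)) : Set (Set (E → ℝ)) := {X | ∃ f ∈ S, X = Z f}

/-- `Î`: the set of zerosets of members of the ideal `I`. -/
def hatI {E : Type} (I : Ideal (Cinf E)) : Set (Set (E → ℝ)) := hatSet (I : Set (Cinf E))

/-- `Φ̌`: the set of smooth functions whose zeroset belongs to `Φ`. -/
def checkSet {E : Type} (Φ : Set (Set (E → ℝ))) : Set (Cinf E) := {f : Cinf E | Z f ∈ Φ}

end

/-- A maximal filter of zerosets: a proper filter of zerosets that is maximal among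
proper filters of zerosets, ordered by inclusion. -/
def IsMaxZFilter {E : Type} (Φ : Set (Set (E → ℝ))) : Prop :=
  IsZFilter Φ ∧ (∅ : Set (E → ℝ)) ∉ Φ ∧
    ∀ Ψ : Set (Set (E → ℝ)), IsZFilter Ψ → (∅ : Set (E → ℝ)) ∉ Ψ → Φ ⊆ Ψ → Ψ = Φ

/-!
`Î` is a proper filter of zerosets for every proper ideal `I`, because
`Z(f² + g²) = Z f ∩ Z g`, `Z(g f) = Z g ∪ Z f` and a smooth function without zeros is a unit;
dually `Φ̌` is a proper ideal for every proper filter `Φ`. The two maps form a Galois connection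
(`Î ⊆ Φ ↔ I ⊆ Φ̌`) with `(Φ̌)^ = Φ`. A maximal ideal `I` lies in the proper ideal `(Î)ˇ`, hence
equals it, which is exactly the `C^∞`-radical property; maximality then transfers in both
directions through the Galois connection.
-/

open Set

variable {E : Type}

section Zeroset

lemma Z_zero : Z (0 : Cinf E) = univ := by
  ext v; simp [Z]

lemma Z_one : Z (1 : Cinf E) = ∅ := by
  ext v; simp [Z]

lemma Z_mul (f g : Cinf E) : Z (f * g) = Z f ∪ Z g := by
  ext v; simp [Z]

lemma Z_mul_self_add_mul_self (f g : Cinf E) : Z (f * f + g * g) = Z f ∩ Z g := by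
  ext v
  simp only [Z, mem_ofPred_eq, mem_inter_iff, Subring.coe_add, Subring.coe_mul, Pi.add_apply,
    Pi.mul_apply]
  rw [add_eq_zero_iff_of_nonneg (mul_self_nonneg _) (mul_self_nonneg _), mul_self_eq_zero,
    mul_self_eq_zero]

lemma Z_inter_subset_Z_add (f g : Cinf E) : Z f ∩ Z g ⊆ Z (f + g) := by
  rintro v ⟨hf, hg⟩
  simp_all [Z]

lemma isUnit_of_Z_eq_empty {f : Cinf E} (hf : Z f = ∅) : IsUnit f := by
  have hf_ne : ∀ v, (f : (E → ℝ) → ℝ) v ≠ 0 := fun v hv =>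
    (eq_empty_iff_forall_notMem.mp hf) v hv
  obtain ⟨s, g, hg, hfg⟩ := f.2
  have hg_ne : ∀ u, g u ≠ 0 := by
    intro u
    obtain ⟨v, rfl⟩ := Subtype.surjective_restrict (β := fun _ => ℝ) (· ∈ s) u
    exact hfg v ▸ hf_ne v
  let f_inv : Cinf E :=
    ⟨fun v => ((f : (E → ℝ) → ℝ) v)⁻¹, s, fun u => (g u)⁻¹, hg.inv hg_ne,
      fun v => congrArg Inv.inv (hfg v)⟩
  exact IsUnit.of_mul_eq_one f_inv (Subtype.ext (funext fun v => mul_inv_cancel₀ (hf_ne v)))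

end Zeroset

section GaloisConnection

lemma hatI_isZFilter (I : Ideal (Cinf E)) : IsZFilter (hatI I) := by
  refine ⟨?_, ⟨0, I.zero_mem, Z_zero.symm⟩, ?_, ?_⟩
  · rintro X ⟨f, -, rfl⟩
    exact ⟨f, rfl⟩
  · rintro F ⟨f, hf, rfl⟩ G ⟨g, hg, rfl⟩
    exact ⟨f * f + g * g, I.add_mem (I.mul_mem_left f hf) (I.mul_mem_left g hg),
      (Z_mul_self_add_mul_self f g).symm⟩
  · rintro F ⟨f, hf, rfl⟩ H ⟨g, rfl⟩ hFH
    exact ⟨g * f, I.mul_mem_left g hf, by rw [Z_mul, union_eq_self_of_subset_right hFH]⟩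

lemma empty_notMem_hatI {I : Ideal (Cinf E)} (hI : I ≠ ⊤) : (∅ : Set (E → ℝ)) ∉ hatI I := by
  rintro ⟨f, hf, hZ⟩
  exact hI (I.eq_top_of_isUnit_mem hf (isUnit_of_Z_eq_empty hZ.symm))

lemma hatI_mono {I J : Ideal (Cinf E)} (h : I ≤ J) : hatI I ⊆ hatI J := by
  rintro X ⟨f, hf, rfl⟩
  exact ⟨f, h hf, rfl⟩

def checkIdeal {Φ : Set (Set (E → ℝ))} (hΦ : IsZFilter Φ) : Ideal (Cinf E) where
  carrier := checkSet Φ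
  zero_mem' := by
    show Z 0 ∈ Φ
    rw [Z_zero]
    exact hΦ.2.1
  add_mem' {f g} hf hg :=
    hΦ.2.2.2 _ (hΦ.2.2.1 _ hf _ hg) _ ⟨f + g, rfl⟩ (Z_inter_subset_Z_add f g)
  smul_mem' c f hf :=
    hΦ.2.2.2 _ hf _ ⟨c * f, rfl⟩ (by rw [smul_eq_mul, Z_mul]; exact subset_union_right)

variable {Φ : Set (Set (E → ℝ))}

lemma mem_checkIdeal (hΦ : IsZFilter Φ) {f : Cinf E} : f ∈ checkIdeal hΦ ↔ Z f ∈ Φ := Iff.rfl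

lemma checkIdeal_ne_top (hΦ : IsZFilter Φ) (hempty : (∅ : Set (E → ℝ)) ∉ Φ) :
    checkIdeal hΦ ≠ ⊤ := by
  intro h
  have h1 : (1 : Cinf E) ∈ checkIdeal hΦ := h ▸ Submodule.mem_top
  rw [mem_checkIdeal, Z_one] at h1
  exact hempty h1

lemma le_checkIdeal_iff (hΦ : IsZFilter Φ) {I : Ideal (Cinf E)} :
    I ≤ checkIdeal hΦ ↔ hatI I ⊆ Φ := by
  constructor
  · rintro h X ⟨f, hf, rfl⟩
    exact h hf
  · exact fun h f hf => h ⟨f, hf, rfl⟩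

lemma hatI_checkIdeal (hΦ : IsZFilter Φ) : hatI (checkIdeal hΦ) = Φ := by
  refine Subset.antisymm ((le_checkIdeal_iff hΦ).mp le_rfl) fun X hX => ?_
  obtain ⟨f, rfl⟩ := hΦ.1 hX
  exact ⟨f, hX, rfl⟩

end GaloisConnection

section Maximal

variable {I : Ideal (Cinf E)}

lemma Ideal.IsMaximal.checkIdeal_hatI (hI : I.IsMaximal) : checkIdeal (hatI_isZFilter I) = I :=
  (hI.eq_of_le (checkIdeal_ne_top _ (empty_notMem_hatI hI.ne_top))
    ((le_checkIdeal_iff _).mpr subset_rfl)).symm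

lemma Ideal.IsMaximal.isCinfRadical (hI : I.IsMaximal) : IsCinfRadical I := by
  rintro g ⟨f, hf, hfg⟩
  rw [← hI.checkIdeal_hatI, mem_checkIdeal]
  exact (hatI_isZFilter I).2.2.2 _ ⟨f, hf, rfl⟩ _ ⟨g, rfl⟩ hfg

lemma Ideal.IsMaximal.isMaxZFilter_hatI (hI : I.IsMaximal) : IsMaxZFilter (hatI I) := by
  refine ⟨hatI_isZFilter I, empty_notMem_hatI hI.ne_top, fun Ψ hΨ hΨempty hIΨ => ?_⟩
  have hI_eq : I = checkIdeal hΨ :=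
    hI.eq_of_le (checkIdeal_ne_top hΨ hΨempty) ((le_checkIdeal_iff hΨ).mpr hIΨ)
  rw [hI_eq, hatI_checkIdeal]

lemma IsMaxZFilter.isMaximal_checkIdeal {Φ : Set (Set (E → ℝ))} (hΦ : IsMaxZFilter Φ) :
    (checkIdeal hΦ.1).IsMaximal := by
  refine ⟨checkIdeal_ne_top hΦ.1 hΦ.2.1, fun J hJ => ?_⟩
  by_contra hJ_top
  have hΦJ : Φ ⊆ hatI J := hatI_checkIdeal hΦ.1 ▸ hatI_mono hJ.le
  have hJΦ : hatI J = Φ := hΦ.2.2 _ (hatI_isZFilter J) (empty_notMem_hatI hJ_top) hΦJ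
  exact hJ.not_ge ((le_checkIdeal_iff hΦ.1).mpr hJΦ.le)

end Maximal

/-- Every maximal ideal of `C^∞(ℝ^E)` is `C^∞`-radical, and `I ↦ Î`,
`Φ ↦ Φ̌` restrict to mutually inverse bijections between maximal filters of zerosets of
`ℝ^E` and maximal ideals of `C^∞(ℝ^E)`. -/
theorem statement11 (E : Type) :
    (∀ I : Ideal (Cinf E), I.IsMaximal → IsCinfRadical I) ∧
    (∀ I : Ideal (Cinf E), I.IsMaximal →
      IsMaxZFilter (hatI I) ∧ checkSet (hatI I) = (I : Set (Cinf E))) ∧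
    (∀ Φ : Set (Set (E → ℝ)), IsMaxZFilter Φ →
      ∃ J : Ideal (Cinf E), (J : Set (Cinf E)) = checkSet Φ ∧ J.IsMaximal ∧ hatI J = Φ) :=
  ⟨fun _ hI => hI.isCinfRadical,
    fun _ hI => ⟨hI.isMaxZFilter_hatI, congrArg SetLike.coe hI.checkIdeal_hatI⟩,
    fun _ hΦ => ⟨checkIdeal hΦ.1, rfl, hΦ.isMaximal_checkIdeal, hatI_checkIdeal hΦ.1⟩⟩
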